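/- Let λ^ρ be strictly dominant with atypical entries λ^ρ_1 < … (indexed by the atypical roots β_1,…,β_r ordered by δ-index), and let (λ^ρ)^⇑ be obtained by replacing each atypical entry by the maximal atypical entry of its atypical component, where λ is piecewise disconnected. If μ^ρ is strictly dominant with the same typical entries as λ^ρ, then {σ ∈ Sym(r) : σ(μ^ρ) ⪯ λ^ρ and σ^{-1}(j)<σ^{-1}(k) whenever j<k and j∼k} = {σ ∈ Sym(r) : σ(μ^ρ) ⪯ (λ^ρ)^⇑ and σ^{-1}(j)<σ^{-1}(k) whenever j<k and j∼k}, where σ(μ^ρ) ⪯ ν means the i-th atypical entry of μ^ρ is ≤ the σ(i)-th atypical entry of ν for all i. -/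

import Mathlib

/-! ## Weight diagrams, cap diagrams and right paths (Brundan–Stroppel / Brundan),
as used in "A Weyl-type character formula for PDC modules of gl(m|n)". -/

/-- The symbols of a weight diagram: `∨`, `∧`, `×`, `∘`. -/
inductive Tag : Type
  | vee | wedge | ex | circ
  deriving DecidableEq

/-- A weight diagram: a function `ℤ → {∨,∧,×,∘}` with finitely many non-`∧` entries. -/
structure WDiag : Type where
  D : ℤ → Tag
  finite : {t : ℤ | D t ≠ Tag.wedge}.Finite

namespace WDiag

/-- The (finite) set of positions of `∨`'s. -/
noncomputable def veeFinset (W : WDiag) : Finset ℤ :=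
  W.finite.toFinset.filter (fun t => W.D t = Tag.vee)

/-- The position of the `i`-th `∨`, counted from the left starting with `i = 0`
(junk value if `i` is out of range). -/
noncomputable def nthVee (W : WDiag) (i : ℕ) : ℤ :=
  (W.veeFinset.sort (· ≤ ·)).getD i 0

/-- In the open interval `(p,q)` there are as many `∨`'s as `∧`'s. -/
def capBal (W : WDiag) (p q : ℤ) : Prop :=
  ((Finset.Ioo p q).filter (fun t => W.D t = Tag.vee)).card =
    ((Finset.Ioo p q).filter (fun t => W.D t = Tag.wedge)).card

/-- `(p,q)` is a cap of the cap diagram of `W`: `p` carries `∨`, `q` is the first `∧` to the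
right of `p` such that the `∨`'s and `∧`'s strictly between `p` and `q` pair off.  This
balance condition characterizes the matching obtained by processing the `∨`'s right to left,
joining each `∨` to the first unmarked `∧` to its right. -/
def IsCap (W : WDiag) (p q : ℤ) : Prop :=
  W.D p = Tag.vee ∧ W.D q = Tag.wedge ∧ p < q ∧ W.capBal p q ∧
    ∀ q', p < q' → q' < q → W.D q' = Tag.wedge → ¬ W.capBal p q'

/-- Cap `(p,q)` is nested (strictly) below cap `(p',q')`. -/
def CapBelow (p q p' q' : ℤ) : Prop := p' < p ∧ q < q'

/-- The diagram obtained by exchanging the `∨` at `p` with the `∧` at `q`. -/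
noncomputable def moveDiag (W : WDiag) (p q : ℤ) : WDiag where
  D := fun t => if t = p then Tag.wedge else if t = q then Tag.vee else W.D t
  finite := by
    classical
    refine Set.Finite.subset (W.finite.union (Set.toFinite {p, q})) ?_
    intro t ht
    by_cases h1 : t = p
    · exact Or.inr (by simp [h1])
    · by_cases h2 : t = q
      · exact Or.inr (by simp [h2])
      · left
        simpa [Set.mem_setOf_eq, h1, h2] using ht

/-- The right move `R_i` (as a relation): exchange the `i`-th `∨` (counted from the left,
`0`-based) with the `∧` to which it is joined by a cap. -/
def RMove (i : ℕ) (W W' : WDiag) : Prop :=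
  i < W.veeFinset.card ∧ ∃ q, W.IsCap (W.nthVee i) q ∧ W' = W.moveDiag (W.nthVee i) q

/-- `PathRel l W W'`: applying the right moves recorded in `l` (head first) turns `W`
into `W'`. -/
def PathRel : List ℕ → WDiag → WDiag → Prop
  | [], W, W' => W = W'
  | i :: l, W, W' => ∃ E, RMove i W E ∧ PathRel l E W'

/-- `l` is a right path from `W` to `W'`: a sequence of right moves
`R_{i₁} ∘ ⋯ ∘ R_{i_k}` with `i₁ ≤ … ≤ i_k`.  Since the composition is applied rightmost
factor first, the list of moves in order of application is weakly decreasing. -/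
def IsRightPath (W W' : WDiag) (l : List ℕ) : Prop :=
  l.Chain' (fun a b => b ≤ a) ∧ PathRel l W W'

/-- `W` and `W'` have the same typical entries (`×`'s and `∘`'s). -/
def SameTypical (W W' : WDiag) : Prop :=
  ∀ t, (W.D t = Tag.ex ↔ W'.D t = Tag.ex) ∧ (W.D t = Tag.circ ↔ W'.D t = Tag.circ)

/-- Totally connected: between any two `∨`'s there is no `∧`. -/
def TC (W : WDiag) : Prop :=
  ∀ p q t, W.D p = Tag.vee → W.D q = Tag.vee → p < t → t < q → W.D t ≠ Tag.wedge

/-- Totally disconnected: between any two `∨`'s there is at least one `∧`. -/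
def TDC (W : WDiag) : Prop :=
  ∀ p q, W.D p = Tag.vee → W.D q = Tag.vee → p < q → ∃ t, p < t ∧ t < q ∧ W.D t = Tag.wedge

/-- `[a,b]` is an atypical component: a maximal nonempty interval containing a `∨` and
no `∧` (maximality amounts to `∧`'s at the two positions just outside). -/
def IsComp (W : WDiag) (a b : ℤ) : Prop :=
  a ≤ b ∧ (∀ t ∈ Finset.Icc a b, W.D t ≠ Tag.wedge) ∧ (∃ t ∈ Finset.Icc a b, W.D t = Tag.vee)
    ∧ W.D (a - 1) = Tag.wedge ∧ W.D (b + 1) = Tag.wedge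

/-- Piecewise disconnected (PDC): for any two consecutive atypical components `T_i = [a,b]`,
`T_{i+1} = [a',b']` (no atypical component strictly between them), the number `t_i` of `∨`'s
in `T_i` is at most the number `s_i` of `∧`'s strictly between `T_i` and `T_{i+1}`. -/
def PDC (W : WDiag) : Prop :=
  ∀ a b a' b', W.IsComp a b → W.IsComp a' b' → b < a' →
    (∀ a'' b'', W.IsComp a'' b'' → ¬(b < a'' ∧ b'' < a')) →
    ((Finset.Icc a b).filter (fun t => W.D t = Tag.vee)).card ≤
      ((Finset.Ioo b a').filter (fun t => W.D t = Tag.wedge)).card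

/-- Positions `x` and `y` lie in the same atypical component: no `∧` in between
(inclusively). -/
def SameComp (W : WDiag) (x y : ℤ) : Prop :=
  ∀ t ∈ Finset.Icc (min x y) (max x y), W.D t ≠ Tag.wedge

/-- A labeled right move on a diagram with `r` labeled `∨`'s (the function `Fin r → ℤ`
records the current position of each labeled `∨`): the move `R_i` moves the label currently
occupying the position of the `i`-th `∨`. -/
def LMove (r : ℕ) (i : ℕ) (S S' : WDiag × (Fin r → ℤ)) : Prop :=
  ∃ (k : Fin r) (q : ℤ), S.2 k = S.1.nthVee i ∧ i < S.1.veeFinset.card ∧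
    S.1.IsCap (S.2 k) q ∧ S'.1 = S.1.moveDiag (S.2 k) q ∧ S'.2 = Function.update S.2 k q

/-- Labeled version of `PathRel`. -/
def LPathRel (r : ℕ) : List ℕ → WDiag × (Fin r → ℤ) → WDiag × (Fin r → ℤ) → Prop
  | [], S, S' => S = S'
  | i :: l, S, S' => ∃ E, LMove r i S E ∧ LPathRel r l E S'

/-- The path `l` from `Wmu` to `Wlam` induces the permutation `σ ∈ Tag(r)`: labeling the `∨`'s
of `Wmu` left to right by `0, …, r−1` and following them along the path, the `k`-th `∨` of
`Wmu` ends at the position of the `σ(k)`-th `∨` of `Wlam`. -/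
def Induces (r : ℕ) (Wmu Wlam : WDiag) (l : List ℕ) (σ : Equiv.Perm (Fin r)) : Prop :=
  ∃ f : Fin r → ℤ, LPathRel r l (Wmu, fun k => Wmu.nthVee k) (Wlam, f) ∧
    ∀ k : Fin r, f k = Wlam.nthVee (σ k)

end WDiag

/-- The weight diagram of a strictly dominant integral weight
`λ^ρ = Σ a_i ε_i − Σ b_j δ_j` of `gl(m|n)`:  put `∨` at `t` if `t ∈ {a_i} ∩ {b_j}`,
`×` if `t ∈ {a_i} ∖ {b_j}`, `∘` if `t ∈ {b_j} ∖ {a_i}`, and `∧` otherwise. -/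
noncomputable def wdOf {m n : ℕ} (a : Fin m → ℤ) (b : Fin n → ℤ) : WDiag := by
  classical
  refine ⟨fun t => if ∃ i, a i = t then (if ∃ j, b j = t then Tag.vee else Tag.ex)
      else (if ∃ j, b j = t then Tag.circ else Tag.wedge), ?_⟩
  refine Set.Finite.subset ((Set.finite_range a).union (Set.finite_range b)) ?_
  intro t ht
  by_cases hA : ∃ i, a i = t
  · exact Or.inl (by obtain ⟨i, hi⟩ := hA; exact ⟨i, hi⟩)
  · by_cases hB : ∃ j, b j = t
    · exact Or.inr (by obtain ⟨j, hj⟩ := hB; exact ⟨j, hj⟩)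
    · exact absurd (by simp [Set.mem_setOf_eq, hA, hB]) ht

/-!
The inclusion `⊆` holds because `λ_j ≤ (λ^ρ)^⇑_j`. Conversely, suppose `σ(μ^ρ) ⪯ (λ^ρ)^⇑` but
`μ_i > λ_j` for `j = σ(i)`, and let `λ_k = (λ^ρ)^⇑_j` be the largest `∨` in the component of `λ_j`.
For `j ≤ t ≤ k` the order condition gives `μ_{σ⁻¹ t} ≥ μ_i > λ_j`, while
`μ_{σ⁻¹ t} ≤ (λ^ρ)^⇑_t = λ_k`. There is no `∧` in `[λ_j, λ_k]` and the typical entries agree, so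
these `k - j + 1` distinct `∨`'s of `μ` are `∨`'s of `λ` in `(λ_j, λ_k]`, of which there are only
`k - j`.
-/

namespace WDiag

variable {W : WDiag} {r : ℕ}

lemma mem_veeFinset {x : ℤ} : x ∈ W.veeFinset ↔ W.D x = Tag.vee := by
  simp +contextual [veeFinset]

lemma nthVee_eq_orderEmbOfFin (hW : W.veeFinset.card = r) (i : Fin r) :
    W.nthVee i = W.veeFinset.orderEmbOfFin hW i := by
  have hi : (i : ℕ) < (W.veeFinset.sort (· ≤ ·)).length := by simp [hW]
  simp [nthVee, Finset.orderEmbOfFin_apply, List.getElem?_eq_getElem hi]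

lemma strictMono_nthVee (hW : W.veeFinset.card = r) : StrictMono fun i : Fin r => W.nthVee i := by
  simpa only [nthVee_eq_orderEmbOfFin hW] using (W.veeFinset.orderEmbOfFin hW).strictMono

lemma D_nthVee (hW : W.veeFinset.card = r) (i : Fin r) : W.D (W.nthVee i) = Tag.vee := by
  rw [nthVee_eq_orderEmbOfFin hW, ← mem_veeFinset]
  exact Finset.orderEmbOfFin_mem _ hW i

lemma exists_nthVee_eq (hW : W.veeFinset.card = r) {x : ℤ} (hx : W.D x = Tag.vee) :
    ∃ i : Fin r, W.nthVee i = x := by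
  have hx' : x ∈ Set.range (W.veeFinset.orderEmbOfFin hW) := by
    rw [Finset.range_orderEmbOfFin]
    exact mem_veeFinset.2 hx
  obtain ⟨i, rfl⟩ := hx'
  exact ⟨i, nthVee_eq_orderEmbOfFin hW i⟩

lemma sameComp_iff {x y : ℤ} : W.SameComp x y ↔ ∀ t ∈ Finset.uIcc x y, W.D t ≠ Tag.wedge :=
  Iff.rfl

lemma sameComp_self {x : ℤ} (hx : W.D x ≠ Tag.wedge) : W.SameComp x x := by
  simpa [sameComp_iff] using hx

lemma SameComp.mono {x y a b : ℤ} (h : W.SameComp x y) (hab : Finset.uIcc a b ⊆ Finset.uIcc x y) :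
    W.SameComp a b :=
  fun t ht => h t (hab ht)

lemma SameComp.symm {x y : ℤ} (h : W.SameComp x y) : W.SameComp y x :=
  h.mono (Finset.uIcc_comm y x).subset

lemma SameComp.trans {x y z : ℤ} (hxy : W.SameComp x y) (hyz : W.SameComp y z) :
    W.SameComp x z := fun t ht =>
  (Finset.mem_union.1 (Finset.uIcc_subset_uIcc_union_uIcc ht)).elim (hxy t) (hyz t)

lemma SameComp.D_ne_wedge {x y t : ℤ} (h : W.SameComp x y) (hxt : x ≤ t) (hty : t ≤ y) :
    W.D t ≠ Tag.wedge :=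
  h t (Finset.mem_uIcc_of_le hxt hty)

lemma SameComp.of_le_of_le {x y t : ℤ} (h : W.SameComp x y) (hxt : x ≤ t) (hty : t ≤ y) :
    W.SameComp x t :=
  h.mono (Finset.uIcc_subset_uIcc_left (Finset.mem_uIcc_of_le hxt hty))

lemma SameTypical.D_eq_vee {W' : WDiag} (h : W.SameTypical W') {x : ℤ} (hx : W.D x = Tag.vee)
    (hx' : W'.D x ≠ Tag.wedge) : W'.D x = Tag.vee := by
  cases hD : W'.D x with
  | vee => rfl
  | wedge => exact absurd hD hx'
  | ex => simp [(h x).1.2 hD] at hx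
  | circ => simp [(h x).2.2 hD] at hx

-- `u` is `(λ^ρ)^⇑` at the `∨` at `x`, for a diagram with `r` `∨`'s.
def IsCompMax (W : WDiag) (r : ℕ) (x u : ℤ) : Prop :=
  ∃ k : Fin r, u = W.nthVee k ∧ W.SameComp x (W.nthVee k) ∧
    ∀ k' : Fin r, W.SameComp x (W.nthVee k') → W.nthVee k' ≤ u

lemma IsCompMax.eq_of_sameComp {x y u v : ℤ} (hu : W.IsCompMax r x u) (hv : W.IsCompMax r y v)
    (hxy : W.SameComp x y) : u = v := by
  obtain ⟨k, rfl, hxk, hu⟩ := hu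
  obtain ⟨l, rfl, hyl, hv⟩ := hv
  exact le_antisymm (hv k (hxy.symm.trans hxk)) (hu l (hxy.trans hyl))

lemma nthVee_le_of_isCompMax (hW : W.veeFinset.card = r) {i : Fin r} {u : ℤ}
    (h : W.IsCompMax r (W.nthVee i) u) : W.nthVee i ≤ u := by
  obtain ⟨-, -, -, hmax⟩ := h
  exact hmax i (sameComp_self (by simp [D_nthVee hW]))

end WDiag

lemma Finset.not_injOn_Icc_of_mapsTo_image_Ioc {α β : Type*} [LinearOrder α]
    [LocallyFiniteOrder α] [DecidableEq β] {j k : α} (hjk : j ≤ k) {f g : α → β}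
    (h : ∀ t ∈ Finset.Icc j k, g t ∈ (Finset.Ioc j k).image f) :
    ¬ Set.InjOn g (Finset.Icc j k) := by
  have hcard : ((Finset.Ioc j k).image f).card < (Finset.Icc j k).card := by
    rw [← Finset.Ioc_insert_left hjk, Finset.card_insert_of_notMem (by simp)]
    exact Nat.lt_succ_of_le Finset.card_image_le
  obtain ⟨x, hx, y, hy, hxy, hg⟩ := Finset.exists_ne_map_eq_of_card_lt_of_maps_to hcard h
  exact fun hinj => hxy (hinj hx hy hg)

namespace WDiag

variable {Wmu Wlam : WDiag} {r : ℕ}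

lemma exists_mem_Ioc_nthVee_eq (hlam : Wlam.veeFinset.card = r) (htyp : Wmu.SameTypical Wlam)
    {j k : Fin r} (hjk : Wlam.SameComp (Wlam.nthVee j) (Wlam.nthVee k)) {x : ℤ}
    (hx : Wmu.D x = Tag.vee) (hjx : Wlam.nthVee j < x) (hxk : x ≤ Wlam.nthVee k) :
    x ∈ (Finset.Ioc j k).image fun s : Fin r => Wlam.nthVee s := by
  obtain ⟨s, rfl⟩ := exists_nthVee_eq hlam (htyp.D_eq_vee hx (hjk.D_ne_wedge hjx.le hxk))
  have hmono := strictMono_nthVee hlam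
  exact Finset.mem_image_of_mem _ (Finset.mem_Ioc.2 ⟨hmono.lt_iff_lt.1 hjx, hmono.le_iff_le.1 hxk⟩)

theorem nthVee_symm_le_nthVee (hmu : Wmu.veeFinset.card = r) (hlam : Wlam.veeFinset.card = r)
    (htyp : Wmu.SameTypical Wlam) {up : Fin r → ℤ}
    (hup : ∀ i : Fin r, Wlam.IsCompMax r (Wlam.nthVee i) (up i)) {σ : Equiv.Perm (Fin r)}
    (hσ : ∀ j k : Fin r, j < k → Wlam.SameComp (Wlam.nthVee j) (Wlam.nthVee k) →
      σ.symm j < σ.symm k)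
    (hle : ∀ j : Fin r, Wmu.nthVee (σ.symm j) ≤ up j) (j : Fin r) :
    Wmu.nthVee (σ.symm j) ≤ Wlam.nthVee j := by
  set g : Fin r → ℤ := fun t => Wmu.nthVee (σ.symm t)
  obtain ⟨k, hk, hjk, -⟩ := hup j
  have hg : Set.InjOn g (Finset.Icc j k) :=
    ((strictMono_nthVee hmu).injective.comp σ.symm.injective).injOn
  by_contra! hlt
  have hmono := strictMono_nthVee hlam
  have hjk_le : j ≤ k := hmono.le_iff_le.1 (hk ▸ nthVee_le_of_isCompMax hlam (hup j))
  have hcomp : ∀ t ∈ Finset.Icc j k, Wlam.SameComp (Wlam.nthVee j) (Wlam.nthVee t) :=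
    fun t ht => hjk.of_le_of_le (hmono.monotone (Finset.mem_Icc.1 ht).1)
      (hmono.monotone (Finset.mem_Icc.1 ht).2)
  refine Finset.not_injOn_Icc_of_mapsTo_image_Ioc (f := fun s => Wlam.nthVee s) hjk_le
    (fun t ht => ?_) hg
  refine exists_mem_Ioc_nthVee_eq hlam htyp hjk (D_nthVee hmu _) ?_ ?_
  · rcases (Finset.mem_Icc.1 ht).1.eq_or_lt with rfl | hjt
    · exact hlt
    · exact hlt.trans ((strictMono_nthVee hmu) (hσ j t hjt (hcomp t ht)))
  · calc g t ≤ up t := hle t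
      _ = up j := ((hup j).eq_of_sameComp (hup t) (hcomp t ht)).symm
      _ = Wlam.nthVee k := hk

end WDiag

open WDiag in
theorem stmt11_general (r : ℕ) (Wmu Wlam : WDiag)
    (hmu : Wmu.veeFinset.card = r) (hlam : Wlam.veeFinset.card = r)
    (htyp : WDiag.SameTypical Wmu Wlam)
    (up : Fin r → ℤ)
    (hup : ∀ i : Fin r, ∃ k : Fin r, up i = Wlam.nthVee k ∧
      Wlam.SameComp (Wlam.nthVee i) (Wlam.nthVee k) ∧
      ∀ k' : Fin r, Wlam.SameComp (Wlam.nthVee i) (Wlam.nthVee k') →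
        Wlam.nthVee k' ≤ up i) :
    {σ : Equiv.Perm (Fin r) |
        (∀ i : Fin r, Wmu.nthVee i ≤ Wlam.nthVee (σ i)) ∧
        ∀ j k : Fin r, j < k → Wlam.SameComp (Wlam.nthVee j) (Wlam.nthVee k) →
          σ.symm j < σ.symm k} =
      {σ : Equiv.Perm (Fin r) |
        (∀ i : Fin r, Wmu.nthVee i ≤ up (σ i)) ∧
        ∀ j k : Fin r, j < k → Wlam.SameComp (Wlam.nthVee j) (Wlam.nthVee k) →
          σ.symm j < σ.symm k} := by
  ext σ
  refine and_congr_left fun hσ => ⟨fun h i => ?_, fun h i => ?_⟩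
  · exact (h i).trans (nthVee_le_of_isCompMax hlam (hup (σ i)))
  · simpa using nthVee_symm_le_nthVee hmu hlam htyp hup hσ
      (fun j => by simpa using h (σ.symm j)) (σ i)

open WDiag in
theorem stmt11 (r : ℕ) (Wmu Wlam : WDiag)
    (hmu : Wmu.veeFinset.card = r) (hlam : Wlam.veeFinset.card = r)
    (htyp : WDiag.SameTypical Wmu Wlam) (hpdc : Wlam.PDC)
    (up : Fin r → ℤ)
    (hup : ∀ i : Fin r, ∃ k : Fin r, up i = Wlam.nthVee k ∧
      Wlam.SameComp (Wlam.nthVee i) (Wlam.nthVee k) ∧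
      ∀ k' : Fin r, Wlam.SameComp (Wlam.nthVee i) (Wlam.nthVee k') →
        Wlam.nthVee k' ≤ up i) :
    {σ : Equiv.Perm (Fin r) |
        (∀ i : Fin r, Wmu.nthVee i ≤ Wlam.nthVee (σ i)) ∧
        ∀ j k : Fin r, j < k → Wlam.SameComp (Wlam.nthVee j) (Wlam.nthVee k) →
          σ.symm j < σ.symm k} =
      {σ : Equiv.Perm (Fin r) |
        (∀ i : Fin r, Wmu.nthVee i ≤ up (σ i)) ∧
        ∀ j k : Fin r, j < k → Wlam.SameComp (Wlam.nthVee j) (Wlam.nthVee k) →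
          σ.symm j < σ.symm k} :=
  stmt11_general r Wmu Wlam hmu hlam htyp up hup
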